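/- arXiv:2302.03672 — 2 statements merged into one kernel-verified Lean document; each statement's English description precedes it below -/
import Mathlib

section
/- Let μ be an additive satisfaction function on an ABB instance. Then every output of the Method of Equal Shares MES[μ] satisfies μ-EJR-1⁺. -/
open Finset

namespace ABB

variable {V P : Type} [Fintype V] [DecidableEq V] [Fintype P] [DecidableEq P]

/-- Total cost of a set of projects. -/
def costOf (c : P → ℝ) (S : Finset P) : ℝ := ∑ p ∈ S, c p

/-- `μ` is an (approval-based) satisfaction function: monotone w.r.t. inclusion,
nonnegative, and zero exactly on the empty set. -/
def IsSatFun (μ : Finset P → ℝ) : Prop :=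
  (∀ S T : Finset P, S ⊆ T → μ S ≤ μ T) ∧
  (∀ S : Finset P, μ S = 0 ↔ S = ∅) ∧
  (∀ S : Finset P, 0 ≤ μ S)

/-- `μ` is strictly increasing. -/
def StrictlyIncreasing (μ : Finset P → ℝ) : Prop :=
  ∀ S T : Finset P, S ⊂ T → μ S < μ T

/-- `μ` is cost-neutral: sets related by a cost-preserving bijection get equal satisfaction. -/
def CostNeutral (c : P → ℝ) (μ : Finset P → ℝ) : Prop :=
  ∀ S T : Finset P,
    (∃ f : {p // p ∈ S} → {p // p ∈ T},
        Function.Bijective f ∧ ∀ p : {p // p ∈ S}, c p.val = c (f p).val) →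
    μ S = μ T

/-- `μ` is additive. -/
def Additive (μ : Finset P → ℝ) : Prop :=
  ∀ S : Finset P, μ S = ∑ p ∈ S, μ {p}

/-- `μ` is strictly cost-responsive. -/
def StrictlyCostResponsive (c : P → ℝ) (μ : Finset P → ℝ) : Prop :=
  ∀ S T : Finset P, costOf c S < costOf c T → μ S < μ T

/-- The instance is a unit-cost instance. -/
def UnitCost (c : P → ℝ) : Prop := ∀ p : P, c p = 1

/-- `μ` has weakly decreasing normalized satisfaction (DNS): it is additive, and for
projects `p, p'` with `c p ≤ c p'` we have `μ {p} ≤ μ {p'}` and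
`μ {p} / c p ≥ μ {p'} / c p'`. -/
def DNS (c : P → ℝ) (μ : Finset P → ℝ) : Prop :=
  Additive μ ∧
  ∀ p p' : P, c p ≤ c p' → μ {p} ≤ μ {p'} ∧ μ {p'} / c p' ≤ μ {p} / c p

/-- A (nonempty) group `N'` of voters is `T`-cohesive. -/
def Cohesive (A : V → Finset P) (c : P → ℝ) (b : ℝ)
    (N' : Finset V) (T : Finset P) : Prop :=
  N'.Nonempty ∧ (∀ i ∈ N', T ⊆ A i) ∧
    costOf c T ≤ ((N'.card : ℝ) / (Fintype.card V : ℝ)) * b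

/-- Extended justified representation w.r.t. `μ`. -/
def EJR (A : V → Finset P) (c : P → ℝ) (b : ℝ) (μ : Finset P → ℝ) (W : Finset P) : Prop :=
  ∀ (N' : Finset V) (T : Finset P), Cohesive A c b N' T →
    ∃ i ∈ N', μ T ≤ μ (A i ∩ W)

/-- EJR up to one project w.r.t. `μ`. -/
def EJR1 (A : V → Finset P) (c : P → ℝ) (b : ℝ) (μ : Finset P → ℝ) (W : Finset P) : Prop :=
  ∀ (N' : Finset V) (T : Finset P), Cohesive A c b N' T →
    T ⊆ W ∨ ∃ i ∈ N', ∃ p ∉ W, μ T < μ (A i ∩ insert p W)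

/-- EJR up to any project w.r.t. `μ`. -/
def EJRx (A : V → Finset P) (c : P → ℝ) (b : ℝ) (μ : Finset P → ℝ) (W : Finset P) : Prop :=
  ∀ (N' : Finset V) (T : Finset P), Cohesive A c b N' T →
    ∃ i ∈ N', ∀ p ∈ T \ W, μ T < μ (A i ∩ insert p W)

/-- `μ`-EJR-1⁺: like EJR-1, but the additional project must come from `T`. -/
def EJR1plus (A : V → Finset P) (c : P → ℝ) (b : ℝ) (μ : Finset P → ℝ) (W : Finset P) : Prop :=
  ∀ (N' : Finset V) (T : Finset P), Cohesive A c b N' T →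
    T ⊆ W ∨ ∃ i ∈ N', ∃ p ∈ T \ W, μ T < μ (A i ∩ insert p W)

/-- Proportional justified representation w.r.t. `μ`. -/
def PJR (A : V → Finset P) (c : P → ℝ) (b : ℝ) (μ : Finset P → ℝ) (W : Finset P) : Prop :=
  ∀ (N' : Finset V) (T : Finset P), Cohesive A c b N' T →
    μ T ≤ μ (W ∩ N'.biUnion A)

/-- PJR up to any project w.r.t. `μ`. -/
def PJRx (A : V → Finset P) (c : P → ℝ) (b : ℝ) (μ : Finset P → ℝ) (W : Finset P) : Prop :=
  ∀ (N' : Finset V) (T : Finset P), Cohesive A c b N' T →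
    ∀ p ∈ T \ W, μ T < μ (insert p (W ∩ N'.biUnion A))

/-- `μ`-Local-BPJR. -/
def LocalBPJR (A : V → Finset P) (c : P → ℝ) (b : ℝ) (μ : Finset P → ℝ) (W : Finset P) : Prop :=
  ¬ ∃ (N' : Finset V) (T Wstar : Finset P),
      Cohesive A c b N' T ∧
      N'.biUnion A ∩ W ⊂ Wstar ∧
      (∀ i ∈ N', Wstar ⊆ A i) ∧
      costOf c Wstar ≤ costOf c T ∧
      (∀ W' : Finset P, (∀ i ∈ N', W' ⊆ A i) → costOf c W' ≤ costOf c T → μ W' ≤ μ Wstar)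

/-- The set of approvers of a project. -/
def approvers (A : V → Finset P) (p : P) : Finset V :=
  Finset.univ.filter (fun i => p ∈ A i)

/-- `p` is `ρ`-affordable given per-voter remaining budgets `bud`. -/
def Affordable (A : V → Finset P) (c : P → ℝ) (μ : Finset P → ℝ)
    (bud : V → ℝ) (p : P) (ρ : ℝ) : Prop :=
  ∑ i ∈ approvers A p, min (bud i) (ρ * μ {p}) = c p

/-- The states (selected set, remaining budgets) reachable by the Method of Equal Shares,
starting from initial per-voter budget `b0`. -/
inductive MESReach (A : V → Finset P) (c : P → ℝ) (μ : Finset P → ℝ) (b0 : ℝ) :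
    Finset P → (V → ℝ) → Prop
  | init : MESReach A c μ b0 ∅ (fun _ => b0)
  | step {W : Finset P} {bud : V → ℝ} {p : P} {ρ : ℝ} :
      MESReach A c μ b0 W bud →
      p ∉ W → 0 ≤ ρ →
      Affordable A c μ bud p ρ →
      (∀ p' ∉ W, ∀ ρ' : ℝ, 0 ≤ ρ' → Affordable A c μ bud p' ρ' → ρ ≤ ρ') →
      MESReach A c μ b0 (insert p W)
        (fun i => if p ∈ A i then bud i - min (bud i) (ρ * μ {p}) else bud i)

/-- `W` is an output of MES[μ]: it is reachable and no further project is affordable. -/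
def MESOutput (A : V → Finset P) (c : P → ℝ) (b : ℝ) (μ : Finset P → ℝ) (W : Finset P) : Prop :=
  ∃ bud : V → ℝ,
    MESReach A c μ (b / (Fintype.card V : ℝ)) W bud ∧
    ∀ p ∉ W, ∀ ρ : ℝ, 0 ≤ ρ → ¬ Affordable A c μ bud p ρ

/-- `(B, d)` is a price system for `W` (conditions C1–C5). -/
def PriceSystem (A : V → Finset P) (c : P → ℝ) (W : Finset P)
    (B : ℝ) (d : V → P → ℝ) : Prop :=
  0 < B ∧
  (∀ (i : V) (p : P), 0 ≤ d i p ∧ d i p ≤ B / (Fintype.card V : ℝ)) ∧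
  (∀ (i : V) (p : P), 0 < d i p → p ∈ A i) ∧
  (∀ (i : V) (p : P), 0 < d i p → p ∈ W) ∧
  (∀ i : V, ∑ p : P, d i p ≤ B / (Fintype.card V : ℝ)) ∧
  (∀ p ∈ W, ∑ i : V, d i p = c p) ∧
  (∀ p ∉ W, ∑ i ∈ approvers A p, (B / (Fintype.card V : ℝ) - ∑ p' : P, d i p') ≤ c p)

/-- Condition C6 for a payment function `d`. -/
def C6 (A : V → Finset P) (c : P → ℝ) (W : Finset P) (d : V → P → ℝ) : Prop :=
  ∀ p ∉ W, ∀ p' ∈ W, ∑ i ∈ approvers A p, d i p' ≤ c p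

/-- Unselected projects with at least one approver. -/
def phragCandidates (A : V → Finset P) (W : Finset P) : Finset P :=
  Finset.univ.filter (fun p => p ∉ W ∧ (approvers A p).Nonempty)

/-- Sequential Phragmén's value `t(p)` given loads `l`. -/
noncomputable def phragLoad (A : V → Finset P) (c : P → ℝ) (l : V → ℝ) (p : P) : ℝ :=
  (c p + ∑ i ∈ approvers A p, l i) / ((approvers A p).card : ℝ)

/-- The states (selected set, loads) reachable by sequential Phragmén. -/
inductive PhragReach (A : V → Finset P) (c : P → ℝ) (b : ℝ) :
    Finset P → (V → ℝ) → Prop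
  | init : PhragReach A c b ∅ (fun _ => 0)
  | step {W : Finset P} {l : V → ℝ} {p : P} :
      PhragReach A c b W l →
      p ∈ phragCandidates A W →
      (∀ p' ∈ phragCandidates A W, phragLoad A c l p ≤ phragLoad A c l p') →
      (∀ p' ∈ phragCandidates A W,
        (∀ p'' ∈ phragCandidates A W, phragLoad A c l p' ≤ phragLoad A c l p'') →
        costOf c W + c p' ≤ b) →
      PhragReach A c b (insert p W)
        (fun i => if p ∈ A i then phragLoad A c l p else l i)

/-- `W` is an output of sequential Phragmén: it is reachable and the rule terminates at `W`
(either no candidate is left, or some minimizer of `t` would exceed the budget). -/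
def PhragOutput (A : V → Finset P) (c : P → ℝ) (b : ℝ) (W : Finset P) : Prop :=
  ∃ l : V → ℝ, PhragReach A c b W l ∧
    (phragCandidates A W = ∅ ∨
      ∃ p ∈ phragCandidates A W,
        (∀ p' ∈ phragCandidates A W, phragLoad A c l p ≤ phragLoad A c l p') ∧
        b < costOf c W + c p)

end ABB


/-!
Suppose a `T`-cohesive group `N'` violates EJR-1⁺ for an MES outcome `W`. Let `p₀ ∈ T \ W`
minimise `c(p) / μ(p)` and put `r = c(p₀) / (|N'| μ(p₀))`. By induction along the run, every
member of `N'` keeps at least `c(p₀) / |N'|` of its budget: while it does, `p₀` is affordable at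
rate `r`, so every purchase happens at rate at most `r`; a member therefore pays at most a
`1/|N'|` share of each project of `T` and at most `r μ(p)` for any other project `p`, and the
violated EJR-1⁺ inequality for `p₀` bounds the satisfaction it gets from the latter. Hence `p₀` is
still affordable when MES stops, a contradiction.
-/

namespace ABB

variable {V P : Type} {A : V → Finset P} {c : P → ℝ} {μ : Finset P → ℝ}

theorem IsSatFun.apply_empty (hμ : IsSatFun μ) : μ ∅ = 0 :=
  (hμ.2.1 ∅).2 rfl

theorem IsSatFun.singleton_pos (hμ : IsSatFun μ) (p : P) : 0 < μ {p} :=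
  (hμ.2.2 {p}).lt_of_ne fun h => singleton_ne_empty p ((hμ.2.1 {p}).1 h.symm)

theorem Additive.mul_apply_le_costOf (hadd : Additive μ) (hμ : ∀ p, 0 < μ {p}) {S : Finset P}
    {κ : ℝ} (h : ∀ q ∈ S, κ ≤ c q / μ {q}) : κ * μ S ≤ costOf c S := by
  rw [hadd, mul_sum, costOf]
  exact sum_le_sum fun q hq => (le_div_iff₀ (hμ q)).1 (h q hq)

section DecidableEq

variable [DecidableEq P]

theorem Additive.apply_insert (hμ : Additive μ) {p : P} {S : Finset P} (hp : p ∉ S) :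
    μ (insert p S) = μ {p} + μ S := by
  rw [hμ, sum_insert hp, ← hμ]

theorem Additive.apply_inter_add_apply_sdiff (hμ : Additive μ) (S W : Finset P) :
    μ (S ∩ W) + μ (S \ W) = μ S := by
  rw [hμ, hμ (S \ W), hμ S, sum_inter_add_sum_sdiff]

/-- A bound on what member `i` of `N'` has paid once `W` is bought: a `1/|N'|` share of each
project of `T`, and rate `r` for each other project it approves. -/
noncomputable def spendingCap (A : V → Finset P) (c : P → ℝ) (μ : Finset P → ℝ)
    (N' : Finset V) (T : Finset P) (r : ℝ) (i : V) (W : Finset P) : ℝ :=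
  costOf c (T ∩ W) / #N' + r * μ (A i ∩ (W \ T))

section spendingCap

variable {N' : Finset V} {T W : Finset P} {r : ℝ} {i : V} {p : P}

theorem spendingCap_insert_of_mem (hpT : p ∈ T) (hpW : p ∉ W) :
    spendingCap A c μ N' T r i (insert p W) = spendingCap A c μ N' T r i W + c p / #N' := by
  have hp : p ∉ T ∩ W := fun h => hpW (mem_inter.1 h).2
  rw [spendingCap, spendingCap, inter_insert_of_mem hpT, insert_sdiff_of_mem W hpT, costOf,
    costOf, sum_insert hp, add_div]
  ring

theorem spendingCap_insert_of_notMem_of_mem (hadd : Additive μ) (hpT : p ∉ T) (hpA : p ∈ A i)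
    (hpW : p ∉ W) :
    spendingCap A c μ N' T r i (insert p W) = spendingCap A c μ N' T r i W + r * μ {p} := by
  have hp : p ∉ A i ∩ (W \ T) := fun h => hpW (mem_sdiff.1 (mem_inter.1 h).2).1
  rw [spendingCap, spendingCap, inter_insert_of_notMem hpT, insert_sdiff_of_notMem W hpT,
    inter_insert_of_mem hpA, hadd.apply_insert hp]
  ring

theorem spendingCap_insert_of_notMem_of_notMem (hpT : p ∉ T) (hpA : p ∉ A i) :
    spendingCap A c μ N' T r i (insert p W) = spendingCap A c μ N' T r i W := by
  rw [spendingCap, spendingCap, inter_insert_of_notMem hpT, insert_sdiff_of_notMem W hpT,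
    inter_insert_of_notMem hpA]

theorem le_of_sub_spendingCap_le (hμ : IsSatFun μ) (hr : 0 ≤ r) {Wt : Finset P} (hWt : Wt ⊆ W)
    {b0 x y : ℝ} (hslack : spendingCap A c μ N' T r i W + x ≤ b0)
    (hy : b0 - spendingCap A c μ N' T r i Wt ≤ y) :
    x + costOf c ((T ∩ W) \ Wt) / #N' ≤ y := by
  have hsplit : costOf c (T ∩ Wt) + costOf c ((T ∩ W) \ Wt) = costOf c (T ∩ W) := by
    rw [costOf, costOf, costOf, ← sum_inter_add_sum_sdiff (T ∩ W) Wt,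
      inter_assoc, inter_eq_right.2 hWt]
  have hmono : μ (A i ∩ (Wt \ T)) ≤ μ (A i ∩ (W \ T)) :=
    hμ.1 _ _ (inter_subset_inter_left (sdiff_subset_sdiff hWt le_rfl))
  have hdiv : costOf c (T ∩ Wt) / #N' + costOf c ((T ∩ W) \ Wt) / #N'
      = costOf c (T ∩ W) / #N' := by rw [← add_div, hsplit]
  simp only [spendingCap] at hslack hy
  linarith [mul_le_mul_of_nonneg_left hmono hr]

end spendingCap

theorem Additive.apply_inter_sdiff_add_le (hadd : Additive μ) {S T W : Finset P} {p : P}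
    (hT : T ⊆ S) (hp : p ∈ T \ W) (h : μ (S ∩ insert p W) ≤ μ T) :
    μ (S ∩ (W \ T)) + μ {p} ≤ μ (T \ W) := by
  have hpW : p ∉ S ∩ W := fun h => (mem_sdiff.1 hp).2 (mem_inter.1 h).2
  rw [inter_insert_of_mem (hT (mem_sdiff.1 hp).1), hadd.apply_insert hpW,
    ← hadd.apply_inter_add_apply_sdiff (S ∩ W) T, ← hadd.apply_inter_add_apply_sdiff T W,
    inter_right_comm, inter_eq_right.2 hT, inter_sdiff_assoc] at h
  linarith

theorem spendingCap_add_le (hadd : Additive μ) (hμ : ∀ p, 0 < μ {p}) {N' : Finset V}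
    {T W : Finset P} {p₀ : P} {i : V} {b0 : ℝ} (hc₀ : 0 ≤ c p₀) (hN' : N'.Nonempty)
    (hT : T ⊆ A i) (hcost : costOf c T ≤ #N' * b0) (hp₀ : p₀ ∈ T \ W)
    (hmin : ∀ q ∈ T \ W, c p₀ / μ {p₀} ≤ c q / μ {q})
    (hfail : μ (A i ∩ insert p₀ W) ≤ μ T) :
    spendingCap A c μ N' T (c p₀ / (#N' * μ {p₀})) i W + c p₀ / #N' ≤ b0 := by
  have hcard : (0 : ℝ) < #N' := by exact_mod_cast hN'.card_pos
  have hμ₀ := hμ p₀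
  have hκ : 0 ≤ c p₀ / μ {p₀} := div_nonneg hc₀ hμ₀.le
  have hsat := mul_le_mul_of_nonneg_left (hadd.apply_inter_sdiff_add_le hT hp₀ hfail) hκ
  have hrest := hadd.mul_apply_le_costOf hμ hmin
  have hsplit : costOf c (T ∩ W) + costOf c (T \ W) = costOf c T :=
    sum_inter_add_sum_sdiff T W c
  have hscale : spendingCap A c μ N' T (c p₀ / (#N' * μ {p₀})) i W + c p₀ / #N'
      = (costOf c (T ∩ W) + c p₀ / μ {p₀} * μ (A i ∩ (W \ T)) + c p₀) / #N' := by
    rw [spendingCap]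
    field_simp
  rw [mul_add, div_mul_cancel₀ _ hμ₀.ne'] at hsat
  rw [hscale, div_le_iff₀ hcard]
  linarith

variable [Fintype V]

theorem MESReach.budget_nonneg {b0 : ℝ} (hb0 : 0 ≤ b0) {W : Finset P} {bud : V → ℝ}
    (h : MESReach A c μ b0 W bud) (i : V) : 0 ≤ bud i := by
  induction h with
  | init => exact hb0
  | @step _ bud p ρ _ _ _ _ _ ih =>
    dsimp only
    split_ifs
    · linarith [min_le_left (bud i) (ρ * μ {p}), ih]
    · exact ih

theorem subset_approvers {N' : Finset V} {p : P} (h : ∀ i ∈ N', p ∈ A i) :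
    N' ⊆ approvers A p :=
  fun i hi => mem_filter.2 ⟨mem_univ i, h i hi⟩

theorem exists_affordable_le {bud : V → ℝ} {p : P} {ρ₀ : ℝ} (hbud : ∀ i, 0 ≤ bud i)
    (hc : 0 ≤ c p) (hρ₀ : 0 ≤ ρ₀)
    (h : c p ≤ ∑ i ∈ approvers A p, min (bud i) (ρ₀ * μ {p})) :
    ∃ ρ ∈ Set.Icc 0 ρ₀, Affordable A c μ bud p ρ := by
  have hcont : Continuous fun ρ : ℝ => ∑ i ∈ approvers A p, min (bud i) (ρ * μ {p}) := by
    fun_prop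
  have hzero : ∑ i ∈ approvers A p, min (bud i) (0 * μ {p}) = 0 :=
    sum_eq_zero fun i _ => by rw [zero_mul, min_eq_right (hbud i)]
  exact intermediate_value_Icc hρ₀ hcont.continuousOn ⟨hzero.trans_le hc, h⟩

theorem exists_affordable_of_forall_le {bud : V → ℝ} {p : P} {N' : Finset V}
    (hN : N' ⊆ approvers A p) (hne : N'.Nonempty) (hbud : ∀ i, 0 ≤ bud i) (hc : 0 ≤ c p)
    (hμp : 0 < μ {p}) (hres : ∀ i ∈ N', c p / #N' ≤ bud i) :
    ∃ ρ ∈ Set.Icc 0 (c p / (#N' * μ {p})), Affordable A c μ bud p ρ := by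
  have hcard : (0 : ℝ) < #N' := by exact_mod_cast hne.card_pos
  have hshare : c p / (#N' * μ {p}) * μ {p} = c p / #N' := by field_simp
  refine exists_affordable_le hbud hc (by positivity) ?_
  calc c p = ∑ _i ∈ N', c p / #N' := by rw [sum_const, nsmul_eq_mul]; field_simp
    _ ≤ ∑ i ∈ N', min (bud i) (c p / (#N' * μ {p}) * μ {p}) :=
        sum_le_sum fun i hi => by rw [hshare]; exact le_min (hres i hi) le_rfl
    _ ≤ _ := sum_le_sum_of_subset_of_nonneg hN fun i _ _ =>
        le_min (hbud i) (by rw [hshare]; positivity)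

theorem rate_le_of_forall_le {W : Finset P} {bud : V → ℝ} {ρ : ℝ} {p : P} {N' : Finset V}
    (hmin : ∀ p' ∉ W, ∀ ρ' : ℝ, 0 ≤ ρ' → Affordable A c μ bud p' ρ' → ρ ≤ ρ') (hpW : p ∉ W)
    (hN : N' ⊆ approvers A p) (hne : N'.Nonempty) (hbud : ∀ i, 0 ≤ bud i) (hc : 0 ≤ c p)
    (hμp : 0 < μ {p}) (hres : ∀ i ∈ N', c p / #N' ≤ bud i) :
    ρ ≤ c p / (#N' * μ {p}) := by
  obtain ⟨ρ', hρ', haff⟩ := exists_affordable_of_forall_le hN hne hbud hc hμp hres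
  exact (hmin p hpW ρ' hρ'.1 haff).trans hρ'.2

theorem payment_le_of_forall_lt {bud : V → ℝ} {p : P} {ρ : ℝ} {N' : Finset V}
    (haff : Affordable A c μ bud p ρ) (hbud : ∀ i, 0 ≤ bud i) (hρ : 0 ≤ ρ * μ {p})
    (hN : N' ⊆ approvers A p) (hres : ∀ j ∈ N', c p / #N' < bud j) {i : V} (hi : i ∈ N') :
    min (bud i) (ρ * μ {p}) ≤ c p / #N' := by
  by_contra! hlt
  have hcard : (#N' : ℝ) ≠ 0 := by exact_mod_cast (card_pos.2 ⟨i, hi⟩).ne'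
  have hrate : c p / #N' < ρ * μ {p} := hlt.trans_le (min_le_right _ _)
  have : c p < c p :=
    calc c p = ∑ _j ∈ N', c p / #N' := by rw [sum_const, nsmul_eq_mul]; field_simp
      _ < ∑ j ∈ N', min (bud j) (ρ * μ {p}) :=
          sum_lt_sum_of_nonempty ⟨i, hi⟩ fun j hj => lt_min (hres j hj) hrate
      _ ≤ ∑ j ∈ approvers A p, min (bud j) (ρ * μ {p}) :=
          sum_le_sum_of_subset_of_nonneg hN fun j _ _ => le_min (hbud j) hρ
      _ = c p := haff
  exact lt_irrefl _ this

theorem MESReach.sub_spendingCap_le (hμ : IsSatFun μ) (hadd : Additive μ) (hc : ∀ p, 0 < c p)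
    {b0 r : ℝ} (hb0 : 0 ≤ b0) {N' : Finset V} {T W : Finset P} {p₀ : P}
    (hT : ∀ i ∈ N', T ⊆ A i) (hp₀ : p₀ ∈ T \ W) (hr : c p₀ / (#N' * μ {p₀}) ≤ r)
    (hslack : ∀ i ∈ N', spendingCap A c μ N' T r i W + c p₀ / #N' ≤ b0)
    {Wt : Finset P} {bud : V → ℝ} (h : MESReach A c μ b0 Wt bud) (hWt : Wt ⊆ W) :
    ∀ i ∈ N', b0 - spendingCap A c μ N' T r i Wt ≤ bud i := by
  have hr0 : 0 ≤ r := (div_nonneg (hc p₀).le (by positivity [hμ.singleton_pos p₀])).trans hr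
  have hN : ∀ {q}, q ∈ T → N' ⊆ approvers A q := fun hq => subset_approvers fun j hj => hT j hj hq
  induction h with
  | init => intro i _; simp [spendingCap, costOf, hμ.apply_empty]
  | @step W0 bud0 p ρ hreach hpW0 hρ haff hmin ih =>
    intro i hi
    have hW0 : W0 ⊆ W := (subset_insert p W0).trans hWt
    have hcard : (0 : ℝ) < #N' := by exact_mod_cast card_pos.2 ⟨i, hi⟩
    have hbud0 := hreach.budget_nonneg hb0
    have hres : ∀ j ∈ N', c p₀ / #N' + costOf c ((T ∩ W) \ W0) / #N' ≤ bud0 j :=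
      fun j hj => le_of_sub_spendingCap_le hμ hr0 hW0 (hslack j hj) (ih hW0 j hj)
    have hcost0 : 0 ≤ costOf c ((T ∩ W) \ W0) / #N' :=
      div_nonneg (sum_nonneg fun q _ => (hc q).le) hcard.le
    have hρr : ρ ≤ r := (rate_le_of_forall_le hmin (fun h => (mem_sdiff.1 hp₀).2 (hW0 h))
      (hN (mem_sdiff.1 hp₀).1) ⟨i, hi⟩ hbud0 (hc p₀).le (hμ.singleton_pos p₀)
      fun j hj => (le_add_of_nonneg_right hcost0).trans (hres j hj)).trans hr
    have hprev := ih hW0 i hi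
    dsimp only
    by_cases hpT : p ∈ T
    · have hpW : p ∈ (T ∩ W) \ W0 :=
        mem_sdiff.2 ⟨mem_inter.2 ⟨hpT, hWt (mem_insert_self p W0)⟩, hpW0⟩
      have hshare : c p / #N' < c p₀ / #N' + costOf c ((T ∩ W) \ W0) / #N' := by
        rw [← add_div, div_lt_div_iff_of_pos_right hcard]
        have hcp : c p ≤ costOf c ((T ∩ W) \ W0) := single_le_sum (fun q _ => (hc q).le) hpW
        linarith [hc p₀]
      have hpay := payment_le_of_forall_lt haff hbud0 (mul_nonneg hρ (hμ.singleton_pos p).le)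
        (hN hpT) (fun j hj => hshare.trans_le (hres j hj)) hi
      rw [if_pos (hT i hi hpT), spendingCap_insert_of_mem hpT hpW0]
      linarith
    · by_cases hpA : p ∈ A i
      · have hpay : min (bud0 i) (ρ * μ {p}) ≤ r * μ {p} := (min_le_right _ _).trans
          (mul_le_mul_of_nonneg_right hρr (hμ.singleton_pos p).le)
        rw [if_pos hpA, spendingCap_insert_of_notMem_of_mem hadd hpT hpA hpW0]
        linarith
      · rwa [if_neg hpA, spendingCap_insert_of_notMem_of_notMem hpT hpA]

end DecidableEq

end ABB

theorem statement17_general {V P : Type} [Fintype V] [DecidableEq P]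
    (A : V → Finset P) (c : P → ℝ) (b : ℝ)
    (hc : ∀ p : P, 0 < c p) (hb : 0 < b)
    (μ : Finset P → ℝ) (hμ : ABB.IsSatFun μ) (hadd : ABB.Additive μ)
    (W : Finset P) (hW : ABB.MESOutput A c b μ W) :
    ABB.EJR1plus A c b μ W := by
  obtain ⟨bud, hreach, hstop⟩ := hW
  rintro N' T ⟨hN', hT, hcost⟩
  by_contra! ⟨hTW, hfail⟩
  obtain ⟨p₀, hp₀, hmin⟩ :=
    exists_min_image (T \ W) (fun q => c q / μ {q}) (sdiff_nonempty.2 hTW)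
  have hb0 : 0 ≤ b / Fintype.card V := div_nonneg hb.le (Nat.cast_nonneg _)
  have hslack := fun i hi => ABB.spendingCap_add_le (b0 := b / Fintype.card V) hadd
    hμ.singleton_pos (hc p₀).le hN' (hT i hi) (hcost.trans_eq (by ring)) hp₀ hmin
    (hfail i hi p₀ hp₀)
  have hspent := hreach.sub_spendingCap_le hμ hadd hc hb0 hT hp₀ le_rfl hslack subset_rfl
  have hr : 0 ≤ c p₀ / (#N' * μ {p₀}) := by positivity [hc p₀, hμ.singleton_pos p₀]
  have hres : ∀ i ∈ N', c p₀ / #N' ≤ bud i := fun i hi => by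
    simpa [ABB.costOf, sdiff_eq_empty_iff_subset.2 inter_subset_right] using
      ABB.le_of_sub_spendingCap_le hμ hr subset_rfl (hslack i hi) (hspent i hi)
  obtain ⟨ρ, hρ, haff⟩ := ABB.exists_affordable_of_forall_le
    (ABB.subset_approvers fun j hj => hT j hj (mem_sdiff.1 hp₀).1) hN'
    (hreach.budget_nonneg hb0) (hc p₀).le (hμ.singleton_pos p₀) hres
  exact hstop p₀ (mem_sdiff.1 hp₀).2 ρ hρ.1 haff

/-- For an additive satisfaction function `μ`, every output of MES[μ]
satisfies `μ`-EJR-1⁺. -/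
theorem statement17 {V P : Type} [Fintype V] [DecidableEq V] [Fintype P] [DecidableEq P]
    (A : V → Finset P) (c : P → ℝ) (b : ℝ)
    (hn : 0 < Fintype.card V) (hc : ∀ p : P, 0 < c p) (hb : 0 < b)
    (μ : Finset P → ℝ) (hμ : ABB.IsSatFun μ) (hadd : ABB.Additive μ)
    (W : Finset P) (hW : ABB.MESOutput A c b μ W) :
    ABB.EJR1plus A c b μ W :=
  statement17_general A c b hc hb μ hμ hadd W hW
end

section
/- Given an ABB instance, if an outcome W satisfies PJR-x with respect to the cost-based satisfaction function μ^c, then W satisfies μ-Local-BPJR for every satisfaction function μ. -/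
open Finset

/-!
A violation of Local-BPJR by a `T`-cohesive group `N'` yields a set `W*` that `N'` can afford,
so `N'` is also `W*`-cohesive, and `W*` strictly contains the group's share of `W`. Adding to
that share a project of `W*` outside `W` gives a subset of `W*`, whereas PJR-x for `μ^c` says it
costs strictly more than `W*`.
-/

namespace ABB

variable {V P : Type} [Fintype V] {A : V → Finset P} {c : P → ℝ} {b : ℝ}

theorem costOf_mono (hc : ∀ p, 0 ≤ c p) {S T : Finset P} (h : S ⊆ T) :
    costOf c S ≤ costOf c T :=
  Finset.sum_le_sum_of_subset_of_nonneg h fun p _ _ => hc p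

theorem Cohesive.subset_biUnion [DecidableEq P] {N' : Finset V} {T : Finset P}
    (h : Cohesive A c b N' T) : T ⊆ N'.biUnion A := by
  obtain ⟨⟨i, hi⟩, hTA, -⟩ := h
  exact (hTA i hi).trans (Finset.subset_biUnion_of_mem A hi)

theorem Cohesive.of_cost_le {N' : Finset V} {T T' : Finset P} (h : Cohesive A c b N' T)
    (hT'A : ∀ i ∈ N', T' ⊆ A i) (hcost : costOf c T' ≤ costOf c T) :
    Cohesive A c b N' T' :=
  ⟨h.1, hT'A, hcost.trans h.2.2⟩

theorem PJRx.not_ssubset_of_cohesive [DecidableEq P] (hc : ∀ p, 0 ≤ c p) {W : Finset P}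
    (hW : PJRx A c b (costOf c) W) {N' : Finset V} {T : Finset P}
    (hT : Cohesive A c b N' T) : ¬ W ∩ N'.biUnion A ⊂ T := by
  intro hssub
  obtain ⟨p, hpT, hpnot⟩ := Finset.exists_of_ssubset hssub
  have hpW : p ∉ W := fun hpW => hpnot (Finset.mem_inter.2 ⟨hpW, hT.subset_biUnion hpT⟩)
  have hlt := hW N' T hT p (Finset.mem_sdiff.2 ⟨hpT, hpW⟩)
  have hle := costOf_mono hc (Finset.insert_subset hpT hssub.subset)
  exact hlt.not_ge hle

theorem PJRx.localBPJR [DecidableEq P] (hc : ∀ p, 0 ≤ c p) {W : Finset P}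
    (hW : PJRx A c b (costOf c) W) (μ : Finset P → ℝ) : LocalBPJR A c b μ W := by
  rintro ⟨N', T, Wstar, hT, hssub, hWstarA, hcost, -⟩
  refine hW.not_ssubset_of_cohesive hc (hT.of_cost_le hWstarA hcost) ?_
  rwa [Finset.inter_comm]

end ABB

theorem statement19_general {V P : Type} [Fintype V] [DecidableEq P]
    (A : V → Finset P) (c : P → ℝ) (b : ℝ)
    (hc : ∀ p : P, 0 < c p)
    (W : Finset P)
    (hPJRx : ABB.PJRx A c b (ABB.costOf c) W) :
    ∀ μ : Finset P → ℝ, ABB.IsSatFun μ → ABB.LocalBPJR A c b μ W :=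
  fun μ _ => hPJRx.localBPJR (fun p => (hc p).le) μ

/-- If an outcome satisfies PJR-x w.r.t. the cost-based satisfaction
function `μ^c`, then it satisfies `μ`-Local-BPJR for every satisfaction function `μ`. -/
theorem statement19 {V P : Type} [Fintype V] [DecidableEq V] [Fintype P] [DecidableEq P]
    (A : V → Finset P) (c : P → ℝ) (b : ℝ)
    (hn : 0 < Fintype.card V) (hc : ∀ p : P, 0 < c p) (hb : 0 < b)
    (W : Finset P) (hW : ABB.costOf c W ≤ b)
    (hPJRx : ABB.PJRx A c b (ABB.costOf c) W) :
    ∀ μ : Finset P → ℝ, ABB.IsSatFun μ → ABB.LocalBPJR A c b μ W :=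
  statement19_general A c b hc W hPJRx
end
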